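/- (Unconditional time-decay of the L² norm, Proposition 2.2, case 1.) Let L > 0, γ > 0, δ₂ > 0, let φ : [0,∞) → ℝ be continuously differentiable with φ(t) > 0 and |φ'(t)| ≤ δ₂ for all t ≥ 0, let f : ℝ × [0,∞) → ℂ be continuous, and let u be a classical solution of i∂_t u + (1/2)∂_x²u + |u|²u = f − iγu on (−L,L)×(0,∞) with u(±L,t) = 0 for all t ≥ 0. Assume ∫₀^∞ ∫_{−L}^{L} φ(t)²|f(x,t)|² dx dt < ∞ and ∫₀^∞ ∫_{−L}^{L} |u(x,t)|² dx dt < ∞. Then, with K₀ = (1/2)φ(0)²∫_{−L}^{L}|u(x,0)|²dx + (1/γ)∫₀^∞∫_{−L}^{L}φ²|f|²dxdt + (δ₂²/γ)∫₀^∞∫_{−L}^{L}|u|²dxdt, one has ∫_{−L}^{L} |u(x,t)|² dx ≤ 2K₀/φ(t)² for all t > 0. -/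

import Mathlib

/-!
Pairing the equation with `u` in the real inner product of `ℂ`, the cubic term drops out,
the dispersive term integrates to zero by the Dirichlet condition, and Young's inequality on the
forcing gives `M' ≤ ψ/γ - γM` for the mass `M(t) = ∫|u|²` and `ψ(t) = ∫|f|²`. For `E = φ²M`,
the bound `2φφ' ≤ γφ² + δ₂²/γ` turns this into `E' ≤ (δ₂²/γ)M + φ²ψ/γ`, whose right side is
integrable on `(0,∞)`; integrating over `[0,t]` gives `E(t) ≤ 2K₀`.
-/
open MeasureTheory Set intervalIntegral Complex Filter
open scoped Interval RealInnerProductSpace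

section ParametricIntervalIntegral

variable {E : Type*} [NormedAddCommGroup E] [NormedSpace ℝ E] {a b : ℝ} {F F' : ℝ → ℝ → E}

/-- Extending `F` continuously by `F (projIcc a b x) (max c t)` reduces this to the case of a
continuous integrand. -/
theorem continuousOn_intervalIntegral_of_continuousOn_Icc_prod_Ici (hab : a ≤ b) {c : ℝ}
    (hF : ContinuousOn (fun p : ℝ × ℝ => F p.1 p.2) (Icc a b ×ˢ Ici c)) :
    ContinuousOn (fun t => ∫ x in a..b, F x t) (Ici c) := by
  set G : ℝ → ℝ → E := fun t x => F (projIcc a b hab x) (max c t)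
  have hG : Continuous (Function.uncurry G) :=
    hF.comp_continuous (f := fun p : ℝ × ℝ => ((projIcc a b hab p.2 : ℝ), max c p.1))
      (by fun_prop) fun p => ⟨(projIcc a b hab p.2).2, le_max_left c p.1⟩
  refine (continuous_parametric_intervalIntegral_of_continuous' hG a b).continuousOn.congr
    fun t ht => integral_congr fun x hx => ?_
  rw [uIcc_of_le hab] at hx
  simp [G, projIcc_of_mem hab hx, max_eq_right (mem_Ici.1 ht)]

theorem hasDerivAt_intervalIntegral_of_continuousOn (hab : a ≤ b) {T : Set ℝ} (hT : IsOpen T)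
    (hF : ContinuousOn (fun p : ℝ × ℝ => F p.1 p.2) (Icc a b ×ˢ T))
    (hF' : ContinuousOn (fun p : ℝ × ℝ => F' p.1 p.2) (Icc a b ×ˢ T))
    (hderiv : ∀ x ∈ Icc a b, ∀ t ∈ T, HasDerivAt (F x) (F' x t) t) {t₀ : ℝ} (ht₀ : t₀ ∈ T) :
    HasDerivAt (fun t => ∫ x in a..b, F x t) (∫ x in a..b, F' x t₀) t₀ := by
  obtain ⟨ε, hε, hball⟩ := Metric.nhds_basis_closedBall.mem_iff.1 (hT.mem_nhds ht₀)
  obtain ⟨C, hC⟩ := (isCompact_Icc.prod (isCompact_closedBall t₀ ε)).exists_bound_of_continuousOn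
    (hF'.mono (prod_mono_right hball))
  have hIoc : Ι a b ⊆ Icc a b := uIoc_of_le hab ▸ Ioc_subset_Icc_self
  have slice_meas : ∀ {G : ℝ → ℝ → E} {t},
      ContinuousOn (fun p : ℝ × ℝ => G p.1 p.2) (Icc a b ×ˢ T) → t ∈ T →
      AEStronglyMeasurable (fun x => G x t) (volume.restrict (Ι a b)) := fun hG ht =>
    ((hG.uncurry_right _ ht).mono hIoc).aestronglyMeasurable measurableSet_uIoc
  refine (hasDerivAt_integral_of_dominated_loc_of_deriv_le (F := fun t x => F x t)
    (F' := fun t x => F' x t) (bound := fun _ => C) (Metric.ball_mem_nhds t₀ hε)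
    (eventually_of_mem (hT.mem_nhds ht₀) fun t ht => slice_meas hF ht)
    ((hF.uncurry_right _ ht₀).intervalIntegrable_of_Icc hab) (slice_meas hF' ht₀)
    (ae_of_all _ fun x hx t ht => hC (x, t) ⟨hIoc hx, Metric.ball_subset_closedBall ht⟩)
    intervalIntegrable_const
    (ae_of_all _ fun x hx t ht =>
      hderiv x (hIoc hx) t (hball (Metric.ball_subset_closedBall ht)))).2

end ParametricIntervalIntegral

theorem two_mul_le_mul_sq_add_sq_div {γ : ℝ} (hγ : 0 < γ) (a b : ℝ) :
    2 * a * b ≤ γ * a ^ 2 + b ^ 2 / γ := by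
  have h : 0 ≤ (γ * a - b) ^ 2 / γ := by positivity
  have e : (γ * a - b) ^ 2 / γ = γ * a ^ 2 - 2 * a * b + b ^ 2 / γ := by field_simp; ring
  linarith

/-- The dispersive term `i ∂ₓ² u` does not change the mass: `⟪u, i u''⟫ = (⟪u, i u'⟫)'`
since `⟪u', i u'⟫ = 0`, and the boundary terms vanish. -/
theorem integral_inner_I_mul_deriv2_eq_zero {a b : ℝ} (hab : a ≤ b) {U U' U'' : ℝ → ℂ}
    (hU : ∀ x ∈ Icc a b, HasDerivAt U (U' x) x) (hU' : ∀ x ∈ Icc a b, HasDerivAt U' (U'' x) x)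
    (hU''c : ContinuousOn U'' (Icc a b)) (ha : U a = 0) (hb : U b = 0) :
    ∫ x in a..b, ⟪U x, I * U'' x⟫ = 0 := by
  have hderiv : ∀ x ∈ uIcc a b, HasDerivAt (fun y => ⟪U y, I * U' y⟫) ⟪U x, I * U'' x⟫ x := by
    intro x hx
    rw [uIcc_of_le hab] at hx
    have h := (hU x hx).inner ℝ ((hU' x hx).const_mul I)
    have h0 : ⟪U' x, I * U' x⟫ = 0 := real_inner_I_smul_self ℂ (U' x)
    rwa [h0, add_zero] at h
  have hUc : ContinuousOn U (Icc a b) := fun x hx => (hU x hx).continuousAt.continuousWithinAt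
  rw [integral_eq_sub_of_hasDerivAt hderiv
    ((hUc.inner (continuousOn_const.mul hU''c)).intervalIntegrable_of_Icc hab)]
  simp [ha, hb]

theorem two_inner_le_of_damped_nls {γ : ℝ} (hγ : 0 < γ) {u ut uxx f : ℂ}
    (h : I * ut + (1/2 : ℂ) * uxx + (‖u‖ : ℂ)^2 * u = f - I * γ * u) :
    2 * ⟪u, ut⟫ ≤ ‖f‖ ^ 2 / γ - γ * ‖u‖ ^ 2 + ⟪u, I * uxx⟫ := by
  have hut : ut = -(I * f) - γ * u + I * uxx / 2 + I * ((‖u‖ : ℂ)^2 * u) := by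
    linear_combination (-I) * h + (ut + γ * u) * I_sq
  have hnorm : ‖u‖ ^ 2 = u.re ^ 2 + u.im ^ 2 := by rw [← normSq_eq_norm_sq, normSq_apply]; ring
  have hforce : 2 * ⟪u, -(I * f)⟫ ≤ γ * ‖u‖ ^ 2 + ‖f‖ ^ 2 / γ := calc
    2 * ⟪u, -(I * f)⟫ ≤ 2 * ‖u‖ * ‖f‖ := by
      have := real_inner_le_norm u (-(I * f))
      rw [norm_neg, norm_mul, norm_I, one_mul] at this
      linarith
    _ ≤ _ := two_mul_le_mul_sq_add_sq_div hγ _ _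
  have hid : 2 * ⟪u, ut⟫ = 2 * ⟪u, -(I * f)⟫ - 2 * γ * ‖u‖ ^ 2 + ⟪u, I * uxx⟫ := by
    rw [hut]
    simp [Complex.inner, hnorm, ← ofReal_pow]
    ring
  linarith

theorem integral_two_inner_le_of_damped_nls {a b γ : ℝ} (hab : a ≤ b) (hγ : 0 < γ)
    {U Ut Ux Uxx F : ℝ → ℂ} (hUt : ContinuousOn Ut (Icc a b)) (hUxx : ContinuousOn Uxx (Icc a b))
    (hF : ContinuousOn F (Icc a b))
    (hUx : ∀ x ∈ Icc a b, HasDerivAt U (Ux x) x) (hUxx' : ∀ x ∈ Icc a b, HasDerivAt Ux (Uxx x) x)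
    (hPDE : ∀ x ∈ Ioo a b,
      I * Ut x + (1/2 : ℂ) * Uxx x + (‖U x‖ : ℂ)^2 * U x = F x - I * γ * U x)
    (ha : U a = 0) (hb : U b = 0) :
    ∫ x in a..b, 2 * ⟪U x, Ut x⟫ ≤ (∫ x in a..b, ‖F x‖ ^ 2) / γ - γ * ∫ x in a..b, ‖U x‖ ^ 2 := by
  have hU : ContinuousOn U (Icc a b) := fun x hx => (hUx x hx).continuousAt.continuousWithinAt
  have hF2 : IntervalIntegrable (fun x => ‖F x‖ ^ 2) volume a b :=
    (hF.norm.pow 2).intervalIntegrable_of_Icc hab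
  have hU2 : IntervalIntegrable (fun x => ‖U x‖ ^ 2) volume a b :=
    (hU.norm.pow 2).intervalIntegrable_of_Icc hab
  have hdisp : IntervalIntegrable (fun x => ⟪U x, I * Uxx x⟫) volume a b :=
    (hU.inner (continuousOn_const.mul hUxx)).intervalIntegrable_of_Icc hab
  calc ∫ x in a..b, 2 * ⟪U x, Ut x⟫
      ≤ ∫ x in a..b, (‖F x‖ ^ 2 / γ - γ * ‖U x‖ ^ 2 + ⟪U x, I * Uxx x⟫) :=
        integral_mono_on_of_le_Ioo hab
          ((continuousOn_const.mul (hU.inner (𝕜 := ℝ) hUt)).intervalIntegrable_of_Icc hab)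
          (((hF2.div_const γ).sub (hU2.const_mul γ)).add hdisp)
          fun x hx => two_inner_le_of_damped_nls hγ (hPDE x hx)
    _ = (∫ x in a..b, ‖F x‖ ^ 2) / γ - γ * ∫ x in a..b, ‖U x‖ ^ 2 := by
      rw [integral_add ((hF2.div_const γ).sub (hU2.const_mul γ)) hdisp,
        integral_sub (hF2.div_const γ) (hU2.const_mul γ), intervalIntegral.integral_div,
        intervalIntegral.integral_const_mul,
        integral_inner_I_mul_deriv2_eq_zero hab hUx hUxx' hUxx ha hb, add_zero]

theorem weighted_le_of_damped_deriv_le {φ φ' M M' ψ : ℝ → ℝ} {γ δ t : ℝ} (hγ : 0 < γ)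
    (hφ : ∀ s ≥ 0, HasDerivAt φ (φ' s) s) (hφ' : ∀ s ≥ 0, |φ' s| ≤ δ)
    (hMc : ContinuousOn M (Ici 0)) (hM : ∀ s > 0, HasDerivAt M (M' s) s)
    (hM' : ∀ s > 0, M' s ≤ ψ s / γ - γ * M s) (hM0 : ∀ s, 0 ≤ M s) (hψ0 : ∀ s, 0 ≤ ψ s)
    (hMint : IntegrableOn M (Ioi 0)) (hψint : IntegrableOn (fun s => φ s ^ 2 * ψ s) (Ioi 0))
    (ht : 0 ≤ t) :
    φ t ^ 2 * M t ≤ φ 0 ^ 2 * M 0 + δ ^ 2 / γ * (∫ s in Ioi 0, M s)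
      + 1 / γ * ∫ s in Ioi 0, φ s ^ 2 * ψ s := by
  set g : ℝ → ℝ := fun s => δ ^ 2 / γ * M s + 1 / γ * (φ s ^ 2 * ψ s)
  have hg : IntegrableOn g (Ioi 0) := (hMint.const_mul _).add (hψint.const_mul _)
  have hg0 : ∀ s, 0 ≤ g s := fun s => by have := hM0 s; have := hψ0 s; positivity
  have hderiv : ∀ s > 0,
      HasDerivAt (fun s => φ s ^ 2 * M s) (2 * φ s * φ' s * M s + φ s ^ 2 * M' s) s := fun s hs =>
    (((hφ s hs.le).fun_pow 2).mul (hM s hs)).congr_deriv (by ring)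
  have hderiv_le : ∀ s > 0, 2 * φ s * φ' s * M s + φ s ^ 2 * M' s ≤ g s := by
    intro s hs
    have hweight : 2 * φ s * φ' s ≤ γ * φ s ^ 2 + δ ^ 2 / γ := by
      have : φ' s ^ 2 ≤ δ ^ 2 := sq_le_sq.2 ((hφ' s hs.le).trans (le_abs_self δ))
      have := two_mul_le_mul_sq_add_sq_div hγ (φ s) (φ' s)
      have : φ' s ^ 2 / γ ≤ δ ^ 2 / γ := by gcongr
      linarith
    have h1 := mul_le_mul_of_nonneg_right hweight (hM0 s)
    have h2 := mul_le_mul_of_nonneg_left (hM' s hs) (sq_nonneg (φ s))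
    simp only [g]
    linear_combination h1 + h2
  have hφc : ContinuousOn φ (Ici 0) := fun s hs => (hφ s hs).continuousAt.continuousWithinAt
  have henergy : φ t ^ 2 * M t - φ 0 ^ 2 * M 0 ≤ ∫ s in 0..t, g s :=
    sub_le_integral_of_hasDeriv_right_of_le ht
      (((hφc.pow 2).mul hMc).mono Icc_subset_Ici_self)
      (fun s hs => (hderiv s hs.1).hasDerivWithinAt)
      (Iff.mpr integrableOn_Icc_iff_integrableOn_Ioc (hg.mono_set Ioc_subset_Ioi_self))
      fun s hs => hderiv_le s hs.1
  have htail : ∫ s in 0..t, g s ≤ ∫ s in Ioi 0, g s := by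
    rw [integral_of_le ht]
    exact setIntegral_mono_set hg (ae_of_all _ hg0) Ioc_subset_Ioi_self.eventuallyLE
  rw [integral_add (hMint.const_mul _) (hψint.const_mul _), MeasureTheory.integral_const_mul,
    MeasureTheory.integral_const_mul] at htail
  linarith

theorem unconditional_time_decay_L2_general
    (L γ δ₂ : ℝ) (hL : 0 < L) (hγ : 0 < γ)
    (φ φ' : ℝ → ℝ)
    (hφpos : ∀ t ≥ (0:ℝ), 0 < φ t)
    (hφd : ∀ t ≥ (0:ℝ), HasDerivAt φ (φ' t) t)
    (hφ'b : ∀ t ≥ (0:ℝ), |φ' t| ≤ δ₂)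
    (f : ℝ → ℝ → ℂ)
    (hf : ContinuousOn (fun p : ℝ × ℝ => f p.1 p.2) (Set.univ ×ˢ Set.Ici 0))
    (u ut ux uxx : ℝ → ℝ → ℂ)
    (hu_cont : ContinuousOn (fun p : ℝ × ℝ => u p.1 p.2) (Set.Icc (-L) L ×ˢ Set.Ici 0))
    (hut_cont : ContinuousOn (fun p : ℝ × ℝ => ut p.1 p.2) (Set.Icc (-L) L ×ˢ Set.Ici 0))
    (huxx_cont : ContinuousOn (fun p : ℝ × ℝ => uxx p.1 p.2) (Set.Icc (-L) L ×ˢ Set.Ici 0))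
    (hut : ∀ x ∈ Set.Icc (-L) L, ∀ t > (0:ℝ), HasDerivAt (fun s => u x s) (ut x t) t)
    (hux : ∀ x ∈ Set.Icc (-L) L, ∀ t ≥ (0:ℝ), HasDerivAt (fun y => u y t) (ux x t) x)
    (huxx : ∀ x ∈ Set.Icc (-L) L, ∀ t ≥ (0:ℝ), HasDerivAt (fun y => ux y t) (uxx x t) x)
    (hPDE : ∀ x ∈ Set.Ioo (-L) L, ∀ t > (0:ℝ),
      Complex.I * ut x t + (1/2 : ℂ) * uxx x t + (‖u x t‖ : ℂ)^2 * u x t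
        = f x t - Complex.I * (γ : ℂ) * u x t)
    (hBC : ∀ t ≥ (0:ℝ), u (-L) t = 0 ∧ u L t = 0)
    (hfint : IntegrableOn (fun t => ∫ x in (-L)..L, (φ t)^2 * ‖f x t‖^2) (Set.Ioi 0))
    (huint : IntegrableOn (fun t => ∫ x in (-L)..L, ‖u x t‖^2) (Set.Ioi 0))
    (K₀ : ℝ)
    (hK₀ : K₀ = (1/2) * (φ 0)^2 * (∫ x in (-L)..L, ‖u x 0‖^2)
        + (1/γ) * (∫ t in Set.Ioi (0:ℝ), ∫ x in (-L)..L, (φ t)^2 * ‖f x t‖^2)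
        + (δ₂^2/γ) * (∫ t in Set.Ioi (0:ℝ), ∫ x in (-L)..L, ‖u x t‖^2)) :
    ∀ t > (0:ℝ), (∫ x in (-L)..L, ‖u x t‖^2) ≤ 2 * K₀ / (φ t)^2 := by
  intro t ht
  have hLL : -L ≤ L := by linarith
  set M : ℝ → ℝ := fun s => ∫ x in (-L)..L, ‖u x s‖ ^ 2
  set ψ : ℝ → ℝ := fun s => ∫ x in (-L)..L, ‖f x s‖ ^ 2
  have hf' : ContinuousOn (fun p : ℝ × ℝ => f p.1 p.2) (Icc (-L) L ×ˢ Ici 0) :=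
    hf.mono (prod_mono (subset_univ _) subset_rfl)
  have hmass_deriv : ∀ s > 0, HasDerivAt M (∫ x in (-L)..L, 2 * ⟪u x s, ut x s⟫) s :=
    fun s hs => hasDerivAt_intervalIntegral_of_continuousOn hLL isOpen_Ioi
      ((hu_cont.norm.pow 2).mono (prod_mono subset_rfl Ioi_subset_Ici_self))
      ((continuousOn_const.mul (hu_cont.inner hut_cont)).mono
        (prod_mono subset_rfl Ioi_subset_Ici_self))
      (fun x hx s hs => (hut x hx s hs).norm_sq) hs
  have hmass_deriv_le : ∀ s > 0, ∫ x in (-L)..L, 2 * ⟪u x s, ut x s⟫ ≤ ψ s / γ - γ * M s :=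
    fun s hs => integral_two_inner_le_of_damped_nls hLL hγ (hut_cont.uncurry_right s hs.le)
      (huxx_cont.uncurry_right s hs.le) (hf'.uncurry_right s hs.le)
      (fun x hx => hux x hx s hs.le) (fun x hx => huxx x hx s hs.le) (fun x hx => hPDE x hx s hs)
      (hBC s hs.le).1 (hBC s hs.le).2
  have hM0 : ∀ s, 0 ≤ M s := fun _ => integral_nonneg hLL fun _ _ => sq_nonneg _
  have hψ0 : ∀ s, 0 ≤ ψ s := fun _ => integral_nonneg hLL fun _ _ => sq_nonneg _
  have hforcing : (fun s => ∫ x in (-L)..L, φ s ^ 2 * ‖f x s‖ ^ 2) = fun s => φ s ^ 2 * ψ s :=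
    funext fun s => intervalIntegral.integral_const_mul _ _
  rw [hforcing] at hfint hK₀
  have hweighted := weighted_le_of_damped_deriv_le hγ hφd hφ'b
    (continuousOn_intervalIntegral_of_continuousOn_Icc_prod_Ici hLL (hu_cont.norm.pow 2))
    hmass_deriv hmass_deriv_le hM0 hψ0 huint hfint ht.le
  have hA : 0 ≤ 1 / γ * ∫ s in Ioi 0, φ s ^ 2 * ψ s := mul_nonneg (by positivity)
    (setIntegral_nonneg measurableSet_Ioi fun s _ => mul_nonneg (sq_nonneg _) (hψ0 s))
  have hB : 0 ≤ δ₂ ^ 2 / γ * ∫ s in Ioi 0, M s :=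
    mul_nonneg (by positivity) (setIntegral_nonneg measurableSet_Ioi fun s _ => hM0 s)
  rw [le_div_iff₀ (pow_pos (hφpos t ht.le) 2), hK₀]
  linarith

/-- Unconditional time-decay of the `L²` norm (Proposition 2.2,
case 1): for a classical solution of the damped driven NLS on
`(-L,L) × (0,∞)` with Dirichlet boundary conditions, a time weight `φ > 0`
with `|φ'| ≤ δ₂`, and for a driver with `∫₀^∞∫φ²|f|² < ∞` and
`∫₀^∞∫|u|² < ∞`, one has `∫|u(·,t)|² ≤ 2K₀/φ(t)²` for all `t > 0`, where
`K₀ = (1/2)φ(0)²∫|u₀|² + (1/γ)∫₀^∞∫φ²|f|² + (δ₂²/γ)∫₀^∞∫|u|²`. -/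
theorem unconditional_time_decay_L2
    (L γ δ₂ : ℝ) (hL : 0 < L) (hγ : 0 < γ) (hδ₂ : 0 < δ₂)
    (φ φ' : ℝ → ℝ)
    (hφpos : ∀ t ≥ (0:ℝ), 0 < φ t)
    (hφd : ∀ t ≥ (0:ℝ), HasDerivAt φ (φ' t) t)
    (hφ'c : ContinuousOn φ' (Set.Ici 0))
    (hφ'b : ∀ t ≥ (0:ℝ), |φ' t| ≤ δ₂)
    (f : ℝ → ℝ → ℂ)
    (hf : ContinuousOn (fun p : ℝ × ℝ => f p.1 p.2) (Set.univ ×ˢ Set.Ici 0))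
    (u ut ux uxx : ℝ → ℝ → ℂ)
    (hu_cont : ContinuousOn (fun p : ℝ × ℝ => u p.1 p.2) (Set.Icc (-L) L ×ˢ Set.Ici 0))
    (hut_cont : ContinuousOn (fun p : ℝ × ℝ => ut p.1 p.2) (Set.Icc (-L) L ×ˢ Set.Ici 0))
    (hux_cont : ContinuousOn (fun p : ℝ × ℝ => ux p.1 p.2) (Set.Icc (-L) L ×ˢ Set.Ici 0))
    (huxx_cont : ContinuousOn (fun p : ℝ × ℝ => uxx p.1 p.2) (Set.Icc (-L) L ×ˢ Set.Ici 0))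
    (hut : ∀ x ∈ Set.Icc (-L) L, ∀ t > (0:ℝ), HasDerivAt (fun s => u x s) (ut x t) t)
    (hux : ∀ x ∈ Set.Icc (-L) L, ∀ t ≥ (0:ℝ), HasDerivAt (fun y => u y t) (ux x t) x)
    (huxx : ∀ x ∈ Set.Icc (-L) L, ∀ t ≥ (0:ℝ), HasDerivAt (fun y => ux y t) (uxx x t) x)
    (hPDE : ∀ x ∈ Set.Ioo (-L) L, ∀ t > (0:ℝ),
      Complex.I * ut x t + (1/2 : ℂ) * uxx x t + (‖u x t‖ : ℂ)^2 * u x t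
        = f x t - Complex.I * (γ : ℂ) * u x t)
    (hBC : ∀ t ≥ (0:ℝ), u (-L) t = 0 ∧ u L t = 0)
    (hfint : IntegrableOn (fun t => ∫ x in (-L)..L, (φ t)^2 * ‖f x t‖^2) (Set.Ioi 0))
    (huint : IntegrableOn (fun t => ∫ x in (-L)..L, ‖u x t‖^2) (Set.Ioi 0))
    (K₀ : ℝ)
    (hK₀ : K₀ = (1/2) * (φ 0)^2 * (∫ x in (-L)..L, ‖u x 0‖^2)
        + (1/γ) * (∫ t in Set.Ioi (0:ℝ), ∫ x in (-L)..L, (φ t)^2 * ‖f x t‖^2)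
        + (δ₂^2/γ) * (∫ t in Set.Ioi (0:ℝ), ∫ x in (-L)..L, ‖u x t‖^2)) :
    ∀ t > (0:ℝ), (∫ x in (-L)..L, ‖u x t‖^2) ≤ 2 * K₀ / (φ t)^2 :=
  unconditional_time_decay_L2_general L γ δ₂ hL hγ φ φ' hφpos hφd hφ'b f hf u ut ux uxx hu_cont
    hut_cont huxx_cont hut hux huxx hPDE hBC hfint huint K₀ hK₀
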